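/- arXiv:2503.22077 — 4 statements merged into one kernel-verified Lean document; each statement's English description precedes it below -/
import Mathlib

section
/- Let l > 0, M > 0 and a ∈ ℝ with a ≠ 0, and suppose the quartic polynomial Δ(r) = (r² + a²)(1 − r²/l²) − 2Mr has four distinct real roots r̄₋ < r₋ < r₊ < r̄₊. Then r̄₋ < 0 < r₋. -/
/-!
Clearing denominators, `-l² Δ(r) = r⁴ + (a² - l²) r² + 2Ml² r - a²l²` is a monic quartic without
cubic term, so its four roots sum to zero. A root `r` satisfies `(r² + a²)(l² - r²) = 2Ml² r`, hence
every root is `< l` and every negative root is `< -l`. If `r̄₋ ≥ 0` all roots but the smallest are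
positive and the sum is positive; if `r₋ < 0` (it is not `0` since `Δ(0) = a²`), the sum is
`< -l - l + l + l = 0`.
-/

theorem quartic_roots_sum {K : Type*} [Field K] {b c d e x₁ x₂ x₃ x₄ : K}
    (h₁₂ : x₁ ≠ x₂) (h₁₃ : x₁ ≠ x₃) (h₁₄ : x₁ ≠ x₄) (h₂₃ : x₂ ≠ x₃) (h₂₄ : x₂ ≠ x₄)
    (h₃₄ : x₃ ≠ x₄)
    (hx₁ : x₁ ^ 4 + b * x₁ ^ 3 + c * x₁ ^ 2 + d * x₁ + e = 0)
    (hx₂ : x₂ ^ 4 + b * x₂ ^ 3 + c * x₂ ^ 2 + d * x₂ + e = 0)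
    (hx₃ : x₃ ^ 4 + b * x₃ ^ 3 + c * x₃ ^ 2 + d * x₃ + e = 0)
    (hx₄ : x₄ ^ 4 + b * x₄ ^ 3 + c * x₄ ^ 2 + d * x₄ + e = 0) :
    x₁ + x₂ + x₃ + x₄ = -b := by
  -- successive divided differences of the quartic at the roots
  have cancel : ∀ {x y q : K}, x ≠ y → (x - y) * q = 0 → q = 0 := fun hne h =>
    (mul_eq_zero.mp h).resolve_left (sub_ne_zero.mpr hne)
  have d₁₂ : x₁ ^ 3 + x₁ ^ 2 * x₂ + x₁ * x₂ ^ 2 + x₂ ^ 3 + b * (x₁ ^ 2 + x₁ * x₂ + x₂ ^ 2)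
      + c * (x₁ + x₂) + d = 0 := cancel h₁₂ (by linear_combination hx₁ - hx₂)
  have d₂₃ : x₂ ^ 3 + x₂ ^ 2 * x₃ + x₂ * x₃ ^ 2 + x₃ ^ 3 + b * (x₂ ^ 2 + x₂ * x₃ + x₃ ^ 2)
      + c * (x₂ + x₃) + d = 0 := cancel h₂₃ (by linear_combination hx₂ - hx₃)
  have d₃₄ : x₃ ^ 3 + x₃ ^ 2 * x₄ + x₃ * x₄ ^ 2 + x₄ ^ 3 + b * (x₃ ^ 2 + x₃ * x₄ + x₄ ^ 2)
      + c * (x₃ + x₄) + d = 0 := cancel h₃₄ (by linear_combination hx₃ - hx₄)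
  have d₁₂₃ : x₁ ^ 2 + x₂ ^ 2 + x₃ ^ 2 + x₁ * x₂ + x₂ * x₃ + x₁ * x₃ + b * (x₁ + x₂ + x₃)
      + c = 0 := cancel h₁₃ (by linear_combination d₁₂ - d₂₃)
  have d₂₃₄ : x₂ ^ 2 + x₃ ^ 2 + x₄ ^ 2 + x₂ * x₃ + x₃ * x₄ + x₂ * x₄ + b * (x₂ + x₃ + x₄)
      + c = 0 := cancel h₂₄ (by linear_combination d₂₃ - d₃₄)
  have d₁₂₃₄ : x₁ + x₂ + x₃ + x₄ + b = 0 := cancel h₁₄ (by linear_combination d₁₂₃ - d₂₃₄)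
  linear_combination d₁₂₃₄

noncomputable def kerrDelta (l M a r : ℝ) : ℝ :=
  (r ^ 2 + a ^ 2) * (1 - r ^ 2 / l ^ 2) - 2 * M * r

section kerrDelta

variable {l M a r : ℝ}

theorem kerrDelta_eq_zero_iff (hl : l ≠ 0) :
    kerrDelta l M a r = 0 ↔ (r ^ 2 + a ^ 2) * (l ^ 2 - r ^ 2) = 2 * M * l ^ 2 * r := by
  have key : l ^ 2 * kerrDelta l M a r = (r ^ 2 + a ^ 2) * (l ^ 2 - r ^ 2) - 2 * M * l ^ 2 * r := by
    unfold kerrDelta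
    field_simp
  rw [← sub_eq_zero (b := 2 * M * l ^ 2 * r), ← key, mul_eq_zero, or_iff_right (pow_ne_zero 2 hl)]

theorem ne_zero_of_kerrDelta_eq_zero (ha : a ≠ 0) (h : kerrDelta l M a r = 0) : r ≠ 0 := by
  rintro rfl
  simp [kerrDelta, ha] at h

theorem lt_of_kerrDelta_eq_zero (hl : 0 < l) (hM : 0 < M) (h : kerrDelta l M a r = 0) :
    r < l := by
  rcases le_or_gt r 0 with hr | hr
  · linarith
  have hroot := (kerrDelta_eq_zero_iff hl.ne').mp h
  have hprod : 0 < (r ^ 2 + a ^ 2) * (l ^ 2 - r ^ 2) := hroot ▸ by positivity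
  have hsq : 0 < l ^ 2 - r ^ 2 := pos_of_mul_pos_right hprod (by positivity)
  nlinarith

theorem lt_neg_of_kerrDelta_eq_zero (hl : 0 < l) (hM : 0 < M) (hr : r < 0)
    (h : kerrDelta l M a r = 0) : r < -l := by
  have hroot := (kerrDelta_eq_zero_iff hl.ne').mp h
  have hprod : (r ^ 2 + a ^ 2) * (l ^ 2 - r ^ 2) < 0 :=
    hroot ▸ mul_neg_of_pos_of_neg (by positivity) hr
  have hsq : l ^ 2 - r ^ 2 < 0 := neg_of_mul_neg_right hprod (by positivity)
  nlinarith

theorem quartic_of_kerrDelta_eq_zero (hl : l ≠ 0) (h : kerrDelta l M a r = 0) :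
    r ^ 4 + 0 * r ^ 3 + (a ^ 2 - l ^ 2) * r ^ 2 + 2 * M * l ^ 2 * r + -(a ^ 2 * l ^ 2) = 0 := by
  linear_combination -(kerrDelta_eq_zero_iff hl).mp h

end kerrDelta

/-- If `Δ(r) = (r² + a²)(1 − r²/l²) − 2Mr` (with `l > 0`, `M > 0`, `a ≠ 0`) has four
distinct real roots `r̄₋ < r₋ < r₊ < r̄₊`, then `r̄₋ < 0 < r₋`. -/
theorem kerrDeSitter_smallest_root_neg_second_root_pos
    (l M a rbm rm rp rbp : ℝ)
    (hl : 0 < l) (hM : 0 < M) (ha : a ≠ 0)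
    (h1 : rbm < rm) (h2 : rm < rp) (h3 : rp < rbp)
    (hrbm : (rbm ^ 2 + a ^ 2) * (1 - rbm ^ 2 / l ^ 2) - 2 * M * rbm = 0)
    (hrm : (rm ^ 2 + a ^ 2) * (1 - rm ^ 2 / l ^ 2) - 2 * M * rm = 0)
    (hrp : (rp ^ 2 + a ^ 2) * (1 - rp ^ 2 / l ^ 2) - 2 * M * rp = 0)
    (hrbp : (rbp ^ 2 + a ^ 2) * (1 - rbp ^ 2 / l ^ 2) - 2 * M * rbp = 0) :
    rbm < 0 ∧ 0 < rm := by
  have hsum : rbm + rm + rp + rbp = -0 :=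
    quartic_roots_sum h1.ne (h1.trans h2).ne (h1.trans (h2.trans h3)).ne h2.ne
      (h2.trans h3).ne h3.ne (quartic_of_kerrDelta_eq_zero hl.ne' hrbm)
      (quartic_of_kerrDelta_eq_zero hl.ne' hrm) (quartic_of_kerrDelta_eq_zero hl.ne' hrp)
      (quartic_of_kerrDelta_eq_zero hl.ne' hrbp)
  refine ⟨?_, ?_⟩
  · by_contra! hrbm_nonneg
    linarith
  · by_contra! hrm_nonpos
    have hrm_neg : rm < 0 := hrm_nonpos.lt_of_ne (ne_zero_of_kerrDelta_eq_zero ha hrm)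
    linarith [lt_neg_of_kerrDelta_eq_zero hl hM (h1.trans hrm_neg) hrbm,
      lt_neg_of_kerrDelta_eq_zero hl hM hrm_neg hrm, lt_of_kerrDelta_eq_zero hl hM hrp,
      lt_of_kerrDelta_eq_zero hl hM hrbp]
end

section
/- Let l > 0, M > 0, a ∈ ℝ, and suppose Δ(r) = (r² + a²)(1 − r²/l²) − 2Mr has four distinct real roots r̄₋ < r₋ < r₊ < r̄₊. Then M < r₊ and r̄₊ < l. -/
/-!
Clearing denominators, `-l²Δ(r)` is the monic quartic `r⁴ + (a² − l²)r² + 2Ml²r − a²l²`. By Vieta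
its roots sum to `0` and their third elementary symmetric function is `−2Ml² < 0`; since the sum
vanishes, the latter equals `−(r̄₋ + r₋)(r₋ + r₊)(r₊ + r̄₋)`, which forces `r₊ > 0`, and a positive
root of `Δ` lies below `l`. Then `M < r₊` is the sign of `Δ'(r₊)`, and `r̄₊ < l` follows from
`-l²Δ(l) = 2Ml³ > 0`, since `l` already exceeds `r̄₋ < r₋ < r₊`.
-/

open Polynomial

theorem cubic_coeffs_eq_zero_of_four_roots {R : Type*} [CommRing R] [IsDomain R]
    {α β γ δ w x y z : R} (hwx : w ≠ x) (hwy : w ≠ y) (hwz : w ≠ z) (hxy : x ≠ y)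
    (hxz : x ≠ z) (hyz : y ≠ z) (hw : α * w ^ 3 + β * w ^ 2 + γ * w + δ = 0)
    (hx : α * x ^ 3 + β * x ^ 2 + γ * x + δ = 0) (hy : α * y ^ 3 + β * y ^ 2 + γ * y + δ = 0)
    (hz : α * z ^ 3 + β * z ^ 2 + γ * z + δ = 0) :
    α = 0 ∧ β = 0 ∧ γ = 0 ∧ δ = 0 := by
  classical
  have hp : C α * X ^ 3 + C β * X ^ 2 + C γ * X + C δ = 0 := by
    refine eq_zero_of_natDegree_lt_card_of_eval_eq_zero' _ {w, x, y, z} ?_ ?_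
    · simp only [Finset.mem_insert, Finset.mem_singleton]
      rintro t (rfl | rfl | rfl | rfl) <;> simpa
    · rw [Finset.card_eq_four.mpr ⟨w, x, y, z, hwx, hwy, hwz, hxy, hxz, hyz, rfl⟩]
      exact natDegree_cubic_le.trans_lt (by norm_num)
  refine ⟨?_, ?_, ?_, ?_⟩
  · simpa using congrArg (coeff · 3) hp
  · simpa using congrArg (coeff · 2) hp
  · simpa using congrArg (coeff · 1) hp
  · simpa using congrArg (coeff · 0) hp

theorem quartic_vieta {R : Type*} [CommRing R] [IsDomain R]
    {b c d e w x y z : R} (hwx : w ≠ x) (hwy : w ≠ y) (hwz : w ≠ z) (hxy : x ≠ y)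
    (hxz : x ≠ z) (hyz : y ≠ z) (hw : w ^ 4 + b * w ^ 3 + c * w ^ 2 + d * w + e = 0)
    (hx : x ^ 4 + b * x ^ 3 + c * x ^ 2 + d * x + e = 0)
    (hy : y ^ 4 + b * y ^ 3 + c * y ^ 2 + d * y + e = 0)
    (hz : z ^ 4 + b * z ^ 3 + c * z ^ 2 + d * z + e = 0) :
    b = -(w + x + y + z) ∧ c = w * x + w * y + w * z + x * y + x * z + y * z ∧
      d = -(w * x * y + w * x * z + w * y * z + x * y * z) ∧ e = w * x * y * z := by
  obtain ⟨h3, h2, h1, h0⟩ := cubic_coeffs_eq_zero_of_four_roots hwx hwy hwz hxy hxz hyz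
    (α := b + (w + x + y + z)) (β := c - (w * x + w * y + w * z + x * y + x * z + y * z))
    (γ := d + (w * x * y + w * x * z + w * y * z + x * y * z)) (δ := e - w * x * y * z)
    (by linear_combination hw) (by linear_combination hx) (by linear_combination hy)
    (by linear_combination hz)
  exact ⟨by linear_combination h3, by linear_combination h2, by linear_combination h1,
    by linear_combination h0⟩

theorem pos_of_sum_eq_zero_of_esymm_three_neg {w x y z : ℝ} (hwx : w < x) (hxy : x < y)
    (hsum : w + x + y + z = 0) (he3 : w * x * y + w * x * z + w * y * z + x * y * z < 0) :
    0 < y := by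
  have hfactor :
      w * x * y + w * x * z + w * y * z + x * y * z = -((w + x) * (x + y) * (w + y)) := by
    linear_combination (w * x + w * y + x * y) * hsum
  by_contra! hy
  have : (w + x) * (x + y) * (w + y) < 0 :=
    mul_neg_of_pos_of_neg (mul_pos_of_neg_of_neg (by linarith) (by linarith)) (by linarith)
  linarith

section KerrDeSitter

variable {l M a r : ℝ}

theorem quartic_eq_zero_of_kerrDeSitter_delta_eq_zero (hl : l ≠ 0)
    (h : (r ^ 2 + a ^ 2) * (1 - r ^ 2 / l ^ 2) - 2 * M * r = 0) :
    r ^ 4 + (a ^ 2 - l ^ 2) * r ^ 2 + 2 * M * l ^ 2 * r - a ^ 2 * l ^ 2 = 0 := by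
  field_simp at h
  linear_combination -h

theorem lt_of_kerrDeSitter_delta_eq_zero (hl : 0 < l) (hM : 0 < M) (hr : 0 < r)
    (h : (r ^ 2 + a ^ 2) * (1 - r ^ 2 / l ^ 2) - 2 * M * r = 0) : r < l := by
  have hfactor : 0 < 1 - r ^ 2 / l ^ 2 :=
    pos_of_mul_pos_right (a := r ^ 2 + a ^ 2) (by linarith [mul_pos hM hr]) (by positivity)
  rw [sub_pos, div_lt_one (by positivity)] at hfactor
  exact (pow_lt_pow_iff_left₀ hr.le hl.le two_ne_zero).mp hfactor

end KerrDeSitter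

/-- If `Δ(r) = (r² + a²)(1 − r²/l²) − 2Mr` (with `l > 0`, `M > 0`) has four distinct
real roots `r̄₋ < r₋ < r₊ < r̄₊`, then `M < r₊` and `r̄₊ < l`. -/
theorem kerrDeSitter_horizon_bounds
    (l M a rbm rm rp rbp : ℝ)
    (hl : 0 < l) (hM : 0 < M)
    (h1 : rbm < rm) (h2 : rm < rp) (h3 : rp < rbp)
    (hrbm : (rbm ^ 2 + a ^ 2) * (1 - rbm ^ 2 / l ^ 2) - 2 * M * rbm = 0)
    (hrm : (rm ^ 2 + a ^ 2) * (1 - rm ^ 2 / l ^ 2) - 2 * M * rm = 0)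
    (hrp : (rp ^ 2 + a ^ 2) * (1 - rp ^ 2 / l ^ 2) - 2 * M * rp = 0)
    (hrbp : (rbp ^ 2 + a ^ 2) * (1 - rbp ^ 2 / l ^ 2) - 2 * M * rbp = 0) :
    M < rp ∧ rbp < l := by
  have hquartic {r : ℝ} :=
    quartic_eq_zero_of_kerrDeSitter_delta_eq_zero (r := r) (M := M) (a := a) hl.ne'
  obtain ⟨he1, he2, he3, he4⟩ := quartic_vieta (b := 0) (c := a ^ 2 - l ^ 2)
    (d := 2 * M * l ^ 2) (e := -(a ^ 2 * l ^ 2)) h1.ne (h1.trans h2).ne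
    (h1.trans (h2.trans h3)).ne h2.ne (h2.trans h3).ne h3.ne
    (by linear_combination hquartic hrbm) (by linear_combination hquartic hrm)
    (by linear_combination hquartic hrp) (by linear_combination hquartic hrbp)
  have hrp_pos : 0 < rp :=
    pos_of_sum_eq_zero_of_esymm_three_neg (z := rbp) h1 h2 (by linarith)
      (by linarith [mul_pos hM (pow_pos hl 2)])
  have hrp_lt : rp < l := lt_of_kerrDeSitter_delta_eq_zero hl hM hrp_pos hrp
  -- `-l²Δ(r) = ∏ (r - rᵢ)`, differentiated at `r₊` and evaluated at `l`
  have hderiv : (rp - rbm) * (rp - rm) * (rp - rbp) =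
      4 * rp ^ 3 + 2 * (a ^ 2 - l ^ 2) * rp + 2 * M * l ^ 2 := by
    linear_combination (-3 * rp ^ 2) * he1 - 2 * rp * he2 - he3
  have hval : (l - rbm) * (l - rm) * (l - rp) * (l - rbp) = 2 * M * l ^ 3 := by
    linear_combination -(l ^ 3 * he1) - l ^ 2 * he2 - l * he3 - he4
  constructor
  · have hderiv_neg : (rp - rbm) * (rp - rm) * (rp - rbp) < 0 :=
      mul_neg_of_pos_of_neg (mul_pos (by linarith) (by linarith)) (by linarith)
    have hMl : M * l ^ 2 < rp * l ^ 2 := by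
      linarith [mul_nonneg (sq_nonneg a) hrp_pos.le, pow_pos hrp_pos 3]
    exact lt_of_mul_lt_mul_right hMl (sq_nonneg l)
  · by_contra! hl_le
    have hval_nonpos : (l - rbm) * (l - rm) * (l - rp) * (l - rbp) ≤ 0 :=
      mul_nonpos_of_nonneg_of_nonpos
        (mul_pos (mul_pos (by linarith) (by linarith)) (by linarith)).le (by linarith)
    linarith [mul_pos hM (pow_pos hl 3)]
end

section
/- Let l > 0, M > 0, a ∈ ℝ, and suppose Δ(r) = (r² + a²)(1 − r²/l²) − 2Mr has four distinct real roots r̄₋ < r₋ < r₊ < r̄₊ with 0 ≤ r₋. Then r₊ > |a|. -/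
set_option maxHeartbeats 800000 in
/-- If `Δ(r) = (r² + a²)(1 − r²/l²) − 2Mr` (with `l > 0`, `M > 0`) has four distinct
real roots `r̄₋ < r₋ < r₊ < r̄₊` with `0 ≤ r₋`, then `r₊ > |a|`. -/
theorem kerrDeSitter_event_horizon_gt_abs_a
    (l M a rbm rm rp rbp : ℝ)
    (hl : 0 < l) (hM : 0 < M)
    (h1 : rbm < rm) (h2 : rm < rp) (h3 : rp < rbp) (hrm0 : 0 ≤ rm)
    (hrbm : (rbm ^ 2 + a ^ 2) * (1 - rbm ^ 2 / l ^ 2) - 2 * M * rbm = 0)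
    (hrm : (rm ^ 2 + a ^ 2) * (1 - rm ^ 2 / l ^ 2) - 2 * M * rm = 0)
    (hrp : (rp ^ 2 + a ^ 2) * (1 - rp ^ 2 / l ^ 2) - 2 * M * rp = 0)
    (hrbp : (rbp ^ 2 + a ^ 2) * (1 - rbp ^ 2 / l ^ 2) - 2 * M * rbp = 0) :
    |a| < rp := by
  have hl0 : l ≠ 0 := ne_of_gt hl
  -- Clear denominators: each root satisfies the monic quartic
  -- N(r) = r⁴ - (l²-a²) r² + 2Ml² r - a²l² = 0
  have hN1 : rbm ^ 4 - (l ^ 2 - a ^ 2) * rbm ^ 2 + 2 * M * l ^ 2 * rbm - a ^ 2 * l ^ 2 = 0 := by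
    field_simp at hrbm; linear_combination -hrbm
  have hN2 : rm ^ 4 - (l ^ 2 - a ^ 2) * rm ^ 2 + 2 * M * l ^ 2 * rm - a ^ 2 * l ^ 2 = 0 := by
    field_simp at hrm; linear_combination -hrm
  have hN3 : rp ^ 4 - (l ^ 2 - a ^ 2) * rp ^ 2 + 2 * M * l ^ 2 * rp - a ^ 2 * l ^ 2 = 0 := by
    field_simp at hrp; linear_combination -hrp
  have hN4 : rbp ^ 4 - (l ^ 2 - a ^ 2) * rbp ^ 2 + 2 * M * l ^ 2 * rbp - a ^ 2 * l ^ 2 = 0 := by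
    field_simp at hrbp; linear_combination -hrbp
  have d12 : rbm - rm ≠ 0 := sub_ne_zero.2 (ne_of_lt h1)
  have d13 : rbm - rp ≠ 0 := sub_ne_zero.2 (ne_of_lt (h1.trans h2))
  have d14 : rbm - rbp ≠ 0 := sub_ne_zero.2 (ne_of_lt ((h1.trans h2).trans h3))
  have d23 : rm - rp ≠ 0 := sub_ne_zero.2 (ne_of_lt h2)
  have d24 : rm - rbp ≠ 0 := sub_ne_zero.2 (ne_of_lt (h2.trans h3))
  have d34 : rp - rbp ≠ 0 := sub_ne_zero.2 (ne_of_lt h3)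
  -- first divided differences
  have hA12 : rbm ^ 3 + rbm ^ 2 * rm + rbm * rm ^ 2 + rm ^ 3
      - (l ^ 2 - a ^ 2) * (rbm + rm) + 2 * M * l ^ 2 = 0 := by
    have h : (rbm - rm) * (rbm ^ 3 + rbm ^ 2 * rm + rbm * rm ^ 2 + rm ^ 3
        - (l ^ 2 - a ^ 2) * (rbm + rm) + 2 * M * l ^ 2) = 0 := by
      linear_combination hN1 - hN2
    exact (mul_eq_zero.mp h).resolve_left d12
  have hA13 : rbm ^ 3 + rbm ^ 2 * rp + rbm * rp ^ 2 + rp ^ 3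
      - (l ^ 2 - a ^ 2) * (rbm + rp) + 2 * M * l ^ 2 = 0 := by
    have h : (rbm - rp) * (rbm ^ 3 + rbm ^ 2 * rp + rbm * rp ^ 2 + rp ^ 3
        - (l ^ 2 - a ^ 2) * (rbm + rp) + 2 * M * l ^ 2) = 0 := by
      linear_combination hN1 - hN3
    exact (mul_eq_zero.mp h).resolve_left d13
  have hA14 : rbm ^ 3 + rbm ^ 2 * rbp + rbm * rbp ^ 2 + rbp ^ 3
      - (l ^ 2 - a ^ 2) * (rbm + rbp) + 2 * M * l ^ 2 = 0 := by
    have h : (rbm - rbp) * (rbm ^ 3 + rbm ^ 2 * rbp + rbm * rbp ^ 2 + rbp ^ 3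
        - (l ^ 2 - a ^ 2) * (rbm + rbp) + 2 * M * l ^ 2) = 0 := by
      linear_combination hN1 - hN4
    exact (mul_eq_zero.mp h).resolve_left d14
  have hA34 : rp ^ 3 + rp ^ 2 * rbp + rp * rbp ^ 2 + rbp ^ 3
      - (l ^ 2 - a ^ 2) * (rp + rbp) + 2 * M * l ^ 2 = 0 := by
    have h : (rp - rbp) * (rp ^ 3 + rp ^ 2 * rbp + rp * rbp ^ 2 + rbp ^ 3
        - (l ^ 2 - a ^ 2) * (rp + rbp) + 2 * M * l ^ 2) = 0 := by
      linear_combination hN3 - hN4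
    exact (mul_eq_zero.mp h).resolve_left d34
  -- second divided differences
  have hB123 : rbm ^ 2 + rbm * (rm + rp) + rm ^ 2 + rm * rp + rp ^ 2
      - (l ^ 2 - a ^ 2) = 0 := by
    have h : (rm - rp) * (rbm ^ 2 + rbm * (rm + rp) + rm ^ 2 + rm * rp + rp ^ 2
        - (l ^ 2 - a ^ 2)) = 0 := by
      linear_combination hA12 - hA13
    exact (mul_eq_zero.mp h).resolve_left d23
  have hB124 : rbm ^ 2 + rbm * (rm + rbp) + rm ^ 2 + rm * rbp + rbp ^ 2
      - (l ^ 2 - a ^ 2) = 0 := by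
    have h : (rm - rbp) * (rbm ^ 2 + rbm * (rm + rbp) + rm ^ 2 + rm * rbp + rbp ^ 2
        - (l ^ 2 - a ^ 2)) = 0 := by
      linear_combination hA12 - hA14
    exact (mul_eq_zero.mp h).resolve_left d24
  -- Vieta: sum of roots
  have e1 : rbm + rm + rp + rbp = 0 := by
    have h : (rp - rbp) * (rbm + rm + rp + rbp) = 0 := by
      linear_combination hB123 - hB124
    exact (mul_eq_zero.mp h).resolve_left d34
  -- Vieta: second symmetric function
  have e2 : rbm * rm + rbm * rp + rbm * rbp + rm * rp + rm * rbp + rp * rbp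
      = a ^ 2 - l ^ 2 := by
    linear_combination (rbm + rm + rp) * e1 - hB123
  -- Vieta: third symmetric function
  have e3 : rbm * rm * rp + rbm * rm * rbp + rbm * rp * rbp + rm * rp * rbp
      = -(2 * M * l ^ 2) := by
    linear_combination (1/2 : ℝ) * hA12 + (1/2 : ℝ) * hA34
      + (1/2 : ℝ) * (rbm * rm + rp * rbp - (rbm + rm) ^ 2 - (rp + rbp) ^ 2) * e1
      + ((rbm + rm + rp + rbp) / 2) * e2
  -- Vieta: product of roots
  have e4 : rbm * rm * rp * rbp = -(a ^ 2 * l ^ 2) := by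
    linear_combination rbm ^ 3 * e1 - rbm ^ 2 * e2 + rbm * e3 - hN1
  -- key identity
  have key : (rp ^ 2 - a ^ 2) * (rp ^ 2 + l ^ 2)
      = rp * (2 * rp ^ 3 + rm * rp ^ 2 + rm ^ 2 * rp + rbp * (rp ^ 2 - rm ^ 2)
        + rbp ^ 2 * (rp - rm)) := by
    linear_combination rp ^ 2 * e2 - e4
      + (rm * rp * rbp - rp ^ 2 * (rm + rp + rbp)) * e1
  have hrp0 : 0 < rp := lt_of_le_of_lt hrm0 h2
  have hrbp0 : 0 < rbp := hrp0.trans h3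
  have hg : 0 < 2 * rp ^ 3 + rm * rp ^ 2 + rm ^ 2 * rp + rbp * (rp ^ 2 - rm ^ 2)
      + rbp ^ 2 * (rp - rm) := by
    have h5 : rm ^ 2 < rp ^ 2 := by nlinarith
    have := mul_pos hrbp0 (sub_pos.2 h5)
    have := mul_pos (mul_pos hrbp0 hrbp0) (sub_pos.2 h2)
    nlinarith [pow_pos hrp0 3, mul_nonneg hrm0 (sq_nonneg rp),
      mul_nonneg (mul_nonneg hrm0 hrm0) hrp0.le]
  have hll : (0:ℝ) < rp ^ 2 + l ^ 2 := by positivity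
  have hpos : 0 < (rp ^ 2 - a ^ 2) * (rp ^ 2 + l ^ 2) := by rw [key]; exact mul_pos hrp0 hg
  have hlt : a ^ 2 < rp ^ 2 := by nlinarith [hpos, hll]
  exact lt_of_pow_lt_pow_left₀ 2 hrp0.le (by rwa [sq_abs])
end

section
/- Let l > 0, M > 0, a ∈ ℝ, and suppose Δ(r) = (r² + a²)(1 − r²/l²) − 2Mr has four distinct real roots r̄₋ < r₋ < r₊ < r̄₊ with 0 ≤ r₋. Then a²/l² < 1/4. -/
private lemma kds_aux_key (x y z : ℝ) (hx : 0 ≤ x) (hy : 0 ≤ y) (hz : 0 ≤ z) :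
    12 * ((x + y + z) * (x * y * z))
      ≤ (x ^ 2 + y ^ 2 + z ^ 2 + x * y + y * z + z * x) ^ 2 := by
  have h1 : 3 * ((x + y + z) * (x * y * z)) ≤ (x * y + y * z + z * x) ^ 2 := by
    nlinarith [sq_nonneg (x * y - y * z), sq_nonneg (y * z - z * x), sq_nonneg (z * x - x * y)]
  have h2 : 0 ≤ x ^ 2 + y ^ 2 + z ^ 2 - (x * y + y * z + z * x) := by
    nlinarith [sq_nonneg (x - y), sq_nonneg (y - z), sq_nonneg (z - x)]
  have h3 : 0 ≤ x * y + y * z + z * x :=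
    by positivity
  nlinarith [h1, h2, h3, mul_nonneg h2 (by nlinarith [h2, h3] :
    (0:ℝ) ≤ x ^ 2 + y ^ 2 + z ^ 2 + 3 * (x * y + y * z + z * x))]

private lemma kds_aux_fin (b S : ℝ) (hb : 0 ≤ b) (hS : 0 < S)
    (h12 : 12 * (b ^ 2 + b * S) ≤ S ^ 2) : 3 * b < S := by
  nlinarith [mul_pos hS hS, mul_nonneg hb hS.le, sq_nonneg b]

/-- If `Δ(r) = (r² + a²)(1 − r²/l²) − 2Mr` (with `l > 0`, `M > 0`) has four distinct
real roots `r̄₋ < r₋ < r₊ < r̄₊` with `0 ≤ r₋`, then `a²/l² < 1/4`. -/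
theorem kerrDeSitter_rotation_bound
    (l M a rbm rm rp rbp : ℝ)
    (hl : 0 < l) (hM : 0 < M)
    (h1 : rbm < rm) (h2 : rm < rp) (h3 : rp < rbp) (hrm0 : 0 ≤ rm)
    (hrbm : (rbm ^ 2 + a ^ 2) * (1 - rbm ^ 2 / l ^ 2) - 2 * M * rbm = 0)
    (hrm : (rm ^ 2 + a ^ 2) * (1 - rm ^ 2 / l ^ 2) - 2 * M * rm = 0)
    (hrp : (rp ^ 2 + a ^ 2) * (1 - rp ^ 2 / l ^ 2) - 2 * M * rp = 0)
    (hrbp : (rbp ^ 2 + a ^ 2) * (1 - rbp ^ 2 / l ^ 2) - 2 * M * rbp = 0) :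
    a ^ 2 / l ^ 2 < 1 / 4 := by
  have hl0 : l ≠ 0 := ne_of_gt hl
  have hl2 : (0:ℝ) < l ^ 2 := by positivity
  -- polynomial form of the root equations
  have Ht : rbm ^ 4 + (a ^ 2 - l ^ 2) * rbm ^ 2 + 2 * M * l ^ 2 * rbm - a ^ 2 * l ^ 2 = 0 := by
    field_simp at hrbm; linear_combination -hrbm
  have Hx : rm ^ 4 + (a ^ 2 - l ^ 2) * rm ^ 2 + 2 * M * l ^ 2 * rm - a ^ 2 * l ^ 2 = 0 := by
    field_simp at hrm; linear_combination -hrm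
  have Hy : rp ^ 4 + (a ^ 2 - l ^ 2) * rp ^ 2 + 2 * M * l ^ 2 * rp - a ^ 2 * l ^ 2 = 0 := by
    field_simp at hrp; linear_combination -hrp
  have Hz : rbp ^ 4 + (a ^ 2 - l ^ 2) * rbp ^ 2 + 2 * M * l ^ 2 * rbp - a ^ 2 * l ^ 2 = 0 := by
    field_simp at hrbp; linear_combination -hrbp
  -- cubic relations from dividing differences
  have hA : rm ^ 3 + rm ^ 2 * rbm + rm * rbm ^ 2 + rbm ^ 3 + (a ^ 2 - l ^ 2) * (rm + rbm)
      + 2 * M * l ^ 2 = 0 := by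
    have hxt : rm - rbm ≠ 0 := sub_ne_zero.mpr (ne_of_gt h1)
    have key : (rm - rbm) * (rm ^ 3 + rm ^ 2 * rbm + rm * rbm ^ 2 + rbm ^ 3
        + (a ^ 2 - l ^ 2) * (rm + rbm) + 2 * M * l ^ 2) = 0 := by
      linear_combination Hx - Ht
    exact (mul_eq_zero.mp key).resolve_left hxt
  have hB : rp ^ 3 + rp ^ 2 * rbm + rp * rbm ^ 2 + rbm ^ 3 + (a ^ 2 - l ^ 2) * (rp + rbm)
      + 2 * M * l ^ 2 = 0 := by
    have hxt : rp - rbm ≠ 0 := sub_ne_zero.mpr (ne_of_gt (h1.trans h2))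
    have key : (rp - rbm) * (rp ^ 3 + rp ^ 2 * rbm + rp * rbm ^ 2 + rbm ^ 3
        + (a ^ 2 - l ^ 2) * (rp + rbm) + 2 * M * l ^ 2) = 0 := by
      linear_combination Hy - Ht
    exact (mul_eq_zero.mp key).resolve_left hxt
  have hC : rbp ^ 3 + rbp ^ 2 * rbm + rbp * rbm ^ 2 + rbm ^ 3 + (a ^ 2 - l ^ 2) * (rbp + rbm)
      + 2 * M * l ^ 2 = 0 := by
    have hxt : rbp - rbm ≠ 0 := sub_ne_zero.mpr (ne_of_gt ((h1.trans h2).trans h3))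
    have key : (rbp - rbm) * (rbp ^ 3 + rbp ^ 2 * rbm + rbp * rbm ^ 2 + rbm ^ 3
        + (a ^ 2 - l ^ 2) * (rbp + rbm) + 2 * M * l ^ 2) = 0 := by
      linear_combination Hz - Ht
    exact (mul_eq_zero.mp key).resolve_left hxt
  -- quadratic relations
  have hP1 : rm ^ 2 + rm * rp + rp ^ 2 + rbm * (rm + rp) + rbm ^ 2 + (a ^ 2 - l ^ 2) = 0 := by
    have hxy : rm - rp ≠ 0 := sub_ne_zero.mpr (ne_of_lt h2)
    have key : (rm - rp) * (rm ^ 2 + rm * rp + rp ^ 2 + rbm * (rm + rp) + rbm ^ 2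
        + (a ^ 2 - l ^ 2)) = 0 := by linear_combination hA - hB
    exact (mul_eq_zero.mp key).resolve_left hxy
  have hP2 : rp ^ 2 + rp * rbp + rbp ^ 2 + rbm * (rp + rbp) + rbm ^ 2 + (a ^ 2 - l ^ 2) = 0 := by
    have hyz : rp - rbp ≠ 0 := sub_ne_zero.mpr (ne_of_lt h3)
    have key : (rp - rbp) * (rp ^ 2 + rp * rbp + rbp ^ 2 + rbm * (rp + rbp) + rbm ^ 2
        + (a ^ 2 - l ^ 2)) = 0 := by linear_combination hB - hC
    exact (mul_eq_zero.mp key).resolve_left hyz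
  -- sum of roots is zero
  have ht : rbm = -(rm + rp + rbp) := by
    have hxz : rm - rbp ≠ 0 := sub_ne_zero.mpr (ne_of_lt (h2.trans h3))
    have key : (rm - rbp) * (rm + rp + rbp + rbm) = 0 := by linear_combination hP1 - hP2
    have := (mul_eq_zero.mp key).resolve_left hxz
    linarith
  subst ht
  -- Vieta identities
  have hS : rm ^ 2 + rp ^ 2 + rbp ^ 2 + rm * rp + rp * rbp + rbp * rm + a ^ 2 - l ^ 2 = 0 := by
    linear_combination hP1
  have hE : a ^ 2 * l ^ 2 = (rm + rp + rbp) * (rm * rp * rbp) := by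
    linear_combination (-1 : ℝ) * Hx + rm * hA + rm * (rm + rp + rbp) * hS
  -- positivity facts
  have hy0 : 0 < rp := lt_of_le_of_lt hrm0 h2
  have hz0 : 0 < rbp := hy0.trans h3
  set S : ℝ := rm ^ 2 + rp ^ 2 + rbp ^ 2 + rm * rp + rp * rbp + rbp * rm with hSdef
  have hSpos : 0 < S := by
    have e1 : 0 ≤ rm * rp := mul_nonneg hrm0 hy0.le
    have e2 : 0 ≤ rp * rbp := mul_nonneg hy0.le hz0.le
    have e3 : 0 ≤ rbp * rm := mul_nonneg hz0.le hrm0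
    have e4 : 0 < rp ^ 2 := pow_pos hy0 2
    have e5 : 0 ≤ rm ^ 2 := sq_nonneg rm
    have e6 : 0 ≤ rbp ^ 2 := sq_nonneg rbp
    rw [hSdef]; linarith
  have key : 12 * ((rm + rp + rbp) * (rm * rp * rbp)) ≤ S ^ 2 := by
    rw [hSdef]
    have := kds_aux_key rm rp rbp hrm0 hy0.le hz0.le
    linarith [this]
  have hl2eq : l ^ 2 = a ^ 2 + S := by rw [hSdef]; linarith [hS]
  have h12 : 12 * ((a ^ 2) ^ 2 + a ^ 2 * S) ≤ S ^ 2 := by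
    have h' : a ^ 2 * l ^ 2 = (a ^ 2) ^ 2 + a ^ 2 * S := by rw [hl2eq]; ring
    have h'' : (a ^ 2) ^ 2 + a ^ 2 * S = (rm + rp + rbp) * (rm * rp * rbp) := by
      rw [← h']; exact hE
    linarith [key]
  have hfin : 3 * a ^ 2 < S := kds_aux_fin (a ^ 2) S (sq_nonneg a) hSpos h12
  rw [div_lt_div_iff₀ hl2 (by norm_num : (0:ℝ) < 4)]
  linarith [hl2eq, hfin, sq_nonneg a]
end
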